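/- Let σ, ω be locally finite positive Borel measures on ℝⁿ with σ doubling, 0 ≤ α < n, and let T^α be an α-fractional singular integral operator bounded from L²(σ) to L²(ω) with norm 𝔑. Then for every m ≥ 1, every dyadic cube I, every m-th generation dyadic grandchild I' of I, and every 0 < ε₁ < 1, there is C_{m,ε₁} (independent of 𝔑) such that (∫_{3I ∖ I'} |T^α_σ 1_{I'}|² dω)^{1/2} ≤ { C_{m,ε₁} √(A₂^α(σ,ω)) + ε₁ 𝔑 } √(|I'|_σ). -/

import Mathlib

open MeasureTheory ENNReal

noncomputable section

/-- The axis-parallel cube in `ℝⁿ` with center `c` and side length `l`. -/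
def Cube (n : ℕ) (c : Fin n → ℝ) (l : ℝ) : Set (Fin n → ℝ) :=
  {x | ∀ i, |x i - c i| ≤ l / 2}

/-- A measure is doubling with constant `C` if `μ(2Q) ≤ C μ(Q)` for all cubes `Q`. -/
def IsDoubling {n : ℕ} (μ : Measure (Fin n → ℝ)) (C : ℝ) : Prop :=
  ∀ (c : Fin n → ℝ) (l : ℝ), 0 < l →
    μ (Cube n c (2 * l)) ≤ ENNReal.ofReal C * μ (Cube n c l)

/-!
Write `I' = closedBall c' r` in the sup norm and split off its halo `I' \ I''`, where
`I'' = closedBall c' (r - ρ)` and `ρ = r / 2 ^ J`. For `x ∉ I'` the kernel is at most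
`C_CZ ρ^(α-n)` on `I''`, so `|T^α_σ 1_{I''}(x)| ≤ C_CZ ρ^(α-n) |I'|_σ`; squared and integrated
over `3I`, this is controlled by the `A₂^α` condition on `3I`. The halo part costs at most
`𝔑² |I' \ I''|_σ`. By a Vitali covering argument, doubling makes each annulus of width `t`
carry at most `D⁵` times the mass of the next inner one, so `|I' \ I''|_σ ≤ θ^J |I'|_σ` with
`θ = D⁵/(D⁵+1) < 1`, and `J` is chosen with `2 θ^J ≤ ε₁²`.
-/

open Metric Set NNReal

theorem cube_eq_closedBall {n : ℕ} (c : Fin n → ℝ) {l : ℝ} (hl : 0 ≤ l) :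
    Cube n c l = closedBall c (l / 2) := by
  ext x
  simp only [Cube, mem_ofPred_eq, mem_closedBall, dist_pi_le_iff (by linarith : 0 ≤ l / 2),
    Real.dist_eq]

theorem dist_lineMap_div_dist {E : Type*} [NormedAddCommGroup E] [NormedSpace ℝ E] (c x : E)
    {s : ℝ} (hs : 0 ≤ s) (hsx : s ≤ dist x c) :
    dist (AffineMap.lineMap c x (s / dist x c)) c = s ∧
      dist x (AffineMap.lineMap c x (s / dist x c)) = dist x c - s := by
  rw [dist_lineMap_left, dist_right_lineMap, dist_comm c x]
  rcases (dist_nonneg (x := x) (y := c)).eq_or_lt with hzero | hpos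
  · obtain rfl : s = 0 := le_antisymm (hzero ▸ hsx) hs
    simp [← hzero]
  · rw [Real.norm_of_nonneg (by positivity),
      Real.norm_of_nonneg (sub_nonneg.2 (div_le_one_of_le₀ hsx hpos.le))]
    constructor <;> field_simp

theorem ENNReal.le_coe_div_add_one_mul {a b : ℝ≥0∞} {K : ℝ≥0} (h : a ≤ K * b) :
    a ≤ (K / (K + 1) : ℝ≥0) * (a + b) := by
  rw [ENNReal.coe_div (by positivity), ← ENNReal.mul_div_right_comm,
    ENNReal.le_div_iff_mul_le (by simp) (by simp)]
  calc a * ↑(K + 1) = K * a + a := by push_cast; ring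
    _ ≤ K * a + K * b := by gcongr
    _ = K * (a + b) := by ring

theorem ENNReal.exists_two_mul_pow_le {θ ε : ℝ≥0∞} (hθ : θ < 1) (hε : ε ≠ 0) :
    ∃ J : ℕ, 2 * θ ^ J ≤ ε := by
  obtain ⟨J, hJ⟩ := ((ENNReal.tendsto_pow_atTop_nhds_zero_iff.2 hθ).eventually
    (gt_mem_nhds (a := ε / 2) (by simp [hε]))).exists
  exact ⟨J, by rw [mul_comm]; exact ((ENNReal.lt_div_iff_mul_lt (by simp) (by simp)).1 hJ).le⟩

theorem ENNReal.two_mul_ofReal_sq_mul_le {N ε : ℝ} {a b : ℝ≥0∞}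
    (hab : 2 * a ≤ ENNReal.ofReal (ε ^ 2) * b) :
    2 * (ENNReal.ofReal (N ^ 2) * a) ≤ ENNReal.ofReal ((ε * N) ^ 2) * b := by
  calc 2 * (ENNReal.ofReal (N ^ 2) * a) = ENNReal.ofReal (N ^ 2) * (2 * a) := mul_left_comm ..
    _ ≤ ENNReal.ofReal (N ^ 2) * (ENNReal.ofReal (ε ^ 2) * b) := by gcongr
    _ = ENNReal.ofReal ((ε * N) ^ 2) * b := by
        rw [mul_pow, ENNReal.ofReal_mul (sq_nonneg ε)]
        ring

theorem ENNReal.ofReal_sq_mul_add_ofReal_sq_mul_le {a b : ℝ} (ha : 0 ≤ a) (hb : 0 ≤ b)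
    (m : ℝ≥0∞) : ENNReal.ofReal (a ^ 2) * m + ENNReal.ofReal (b ^ 2) * m ≤
      ENNReal.ofReal ((a + b) ^ 2) * m := by
  rw [← add_mul, ← ENNReal.ofReal_add (sq_nonneg a) (sq_nonneg b)]
  gcongr
  nlinarith

theorem Real.mul_rpow_neg_sq_mul_rpow {C ρ L β : ℝ} (hρ : 0 < ρ) (hL : 0 ≤ L) :
    (C * ρ ^ (-β)) ^ 2 * L ^ (2 * β) = (C * (L / ρ) ^ β) ^ 2 := by
  rw [Real.div_rpow hL hρ.le, Real.rpow_neg hρ.le, mul_comm 2 β, Real.rpow_mul hL]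
  simp only [Real.rpow_two]
  field_simp

section BallDoubling

variable {X : Type*} [PseudoMetricSpace X] [MeasurableSpace X]

def IsBallDoubling (μ : Measure X) (D : ℝ≥0) : Prop :=
  ∀ (z : X) (ρ : ℝ), 0 < ρ → μ (closedBall z (2 * ρ)) ≤ D * μ (closedBall z ρ)

theorem IsDoubling.isBallDoubling {n : ℕ} {μ : Measure (Fin n → ℝ)} {C : ℝ}
    (h : IsDoubling μ C) : IsBallDoubling μ C.toNNReal := by
  intro z ρ hρ
  have := h z (2 * ρ) (by positivity)
  rwa [cube_eq_closedBall _ (by positivity), cube_eq_closedBall _ (by positivity),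
    mul_div_cancel_left₀ _ two_ne_zero, mul_div_cancel_left₀ _ two_ne_zero] at this

variable {μ : Measure X} {D : ℝ≥0}

theorem IsBallDoubling.measure_closedBall_two_pow_mul_le (h : IsBallDoubling μ D) (z : X)
    {ρ : ℝ} (hρ : 0 < ρ) (k : ℕ) :
    μ (closedBall z (2 ^ k * ρ)) ≤ D ^ k * μ (closedBall z ρ) := by
  induction k with
  | zero => simp
  | succ k ih =>
    calc μ (closedBall z (2 ^ (k + 1) * ρ)) = μ (closedBall z (2 * (2 ^ k * ρ))) := by
          rw [pow_succ', mul_assoc]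
      _ ≤ D * (D ^ k * μ (closedBall z ρ)) := (h z _ (by positivity)).trans (by gcongr)
      _ = D ^ (k + 1) * μ (closedBall z ρ) := by rw [pow_succ', mul_assoc]

variable [OpensMeasurableSpace X] [TopologicalSpace.SeparableSpace X]

theorem IsBallDoubling.measure_le_pow_mul_measure_biUnion (h : IsBallDoubling μ D) {A : Set X}
    (p : X → X) {ρ : ℝ} (hρ : 0 < ρ) (hA : ∀ a ∈ A, dist a (p a) ≤ ρ) :
    μ A ≤ D ^ 5 * μ (⋃ a ∈ A, closedBall (p a) (ρ / 8)) := by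
  obtain ⟨u, huA, hdisj, hcov⟩ :=
    Vitali.exists_disjoint_subfamily_covering_enlargement_closedBall A p (fun _ => ρ) ρ
      (fun _ _ => le_rfl) 4 (by norm_num)
  have hu : u.Countable := hdisj.countable_of_nonempty_interior fun _ _ =>
    (nonempty_ball.2 hρ).mono ball_subset_interior_closedBall
  have hsmall : u.PairwiseDisjoint fun b => closedBall (p b) (ρ / 8) :=
    hdisj.mono fun b => closedBall_subset_closedBall (by linarith)
  have hcover : A ⊆ ⋃ b ∈ u, closedBall (p b) (2 ^ 5 * (ρ / 8)) := fun a ha => by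
    obtain ⟨b, hb, hsub⟩ := hcov a ha
    refine mem_biUnion hb ?_
    convert hsub (mem_closedBall.2 (hA a ha)) using 2
    ring
  calc μ A ≤ ∑' b : u, μ (closedBall (p b) (2 ^ 5 * (ρ / 8))) :=
        (measure_mono hcover).trans (measure_biUnion_le μ hu _)
    _ ≤ ∑' b : u, D ^ 5 * μ (closedBall (p b) (ρ / 8)) :=
        ENNReal.tsum_le_tsum fun b => h.measure_closedBall_two_pow_mul_le _ (by positivity) 5
    _ = D ^ 5 * μ (⋃ b ∈ u, closedBall (p b) (ρ / 8)) := by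
        rw [ENNReal.tsum_mul_left, measure_biUnion hu hsmall fun _ _ => measurableSet_closedBall]
    _ ≤ D ^ 5 * μ (⋃ a ∈ A, closedBall (p a) (ρ / 8)) := by
        gcongr _ * μ ?_
        exact biUnion_subset_biUnion_left huA

end BallDoubling

section Annulus

variable {E : Type*} [NormedAddCommGroup E] [NormedSpace ℝ E] [MeasurableSpace E]
  [OpensMeasurableSpace E] [TopologicalSpace.SeparableSpace E] {μ : Measure E} {D : ℝ≥0}

/-- Radial projection to the sphere of radius `r - 3t/2` moves the outer annulus by less than
`2t`, and balls of radius `t/4` around the projected points lie in the next annulus. -/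
theorem IsBallDoubling.measure_annulus_le (h : IsBallDoubling μ D) (c : E) {r t : ℝ}
    (ht : 0 < t) (htr : 2 * t ≤ r) :
    μ (closedBall c r \ closedBall c (r - t)) ≤
      D ^ 5 * μ (closedBall c (r - t) \ closedBall c (r - 2 * t)) := by
  set s := r - 3 * t / 2 with hs
  have hproj : ∀ x ∈ closedBall c r \ closedBall c (r - t),
      dist (AffineMap.lineMap c x (s / dist x c)) c = s ∧
        dist x (AffineMap.lineMap c x (s / dist x c)) ≤ 2 * t := by
    rintro x ⟨hxr, hxt⟩
    rw [mem_closedBall] at hxr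
    rw [mem_closedBall, not_le] at hxt
    obtain ⟨hc, hx⟩ := dist_lineMap_div_dist c x (s := s) (by linarith) (by linarith)
    exact ⟨hc, by linarith⟩
  refine (h.measure_le_pow_mul_measure_biUnion _ (by positivity) fun x hx =>
    (hproj x hx).2).trans ?_
  gcongr _ * μ ?_
  refine iUnion₂_subset fun x hx y hy => ?_
  have hy := mem_closedBall.1 hy
  have h₁ := dist_triangle y (AffineMap.lineMap c x (s / dist x c)) c
  have h₂ := dist_triangle_left (AffineMap.lineMap c x (s / dist x c)) c y
  rw [(hproj x hx).1] at h₁ h₂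
  refine ⟨mem_closedBall.2 (by linarith), fun hyc => ?_⟩
  linarith [mem_closedBall.1 hyc]

theorem IsBallDoubling.measure_annulus_le_pow (h : IsBallDoubling μ D) (c : E) {r : ℝ}
    (hr : 0 < r) (J : ℕ) :
    μ (closedBall c r \ closedBall c (r - r / 2 ^ J)) ≤
      ((D ^ 5 / (D ^ 5 + 1) : ℝ≥0) : ℝ≥0∞) ^ J * μ (closedBall c r) := by
  induction J with
  | zero => simpa using measure_mono sdiff_subset
  | succ J ih =>
    set t := r / 2 ^ (J + 1) with ht
    have ht0 : 0 < t := by positivity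
    have h2t : r / 2 ^ J = 2 * t := by rw [ht, pow_succ]; field_simp
    have htr : 2 * t ≤ r := by
      rw [← h2t]; exact div_le_self hr.le (one_le_pow₀ one_le_two)
    have hsplit : μ (closedBall c r \ closedBall c (r - r / 2 ^ J)) =
        μ (closedBall c r \ closedBall c (r - t)) +
          μ (closedBall c (r - t) \ closedBall c (r - 2 * t)) := by
      rw [h2t, ← measure_union (disjoint_sdiff_left.mono_right sdiff_subset)
        (measurableSet_closedBall.diff measurableSet_closedBall),
        sdiff_union_sdiff_cancel (closedBall_subset_closedBall (by linarith))
          (closedBall_subset_closedBall (by linarith))]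
    calc μ (closedBall c r \ closedBall c (r - t))
        ≤ (D ^ 5 / (D ^ 5 + 1) : ℝ≥0) * μ (closedBall c r \ closedBall c (r - r / 2 ^ J)) := by
          rw [hsplit]
          exact ENNReal.le_coe_div_add_one_mul (by exact_mod_cast h.measure_annulus_le c ht0 htr)
      _ ≤ _ := by rw [pow_succ' _ J, mul_assoc]; gcongr

end Annulus

theorem lintegral_ofReal_indicator_one_sq {X : Type*} [MeasurableSpace X] (μ : Measure X)
    {s : Set X} (hs : MeasurableSet s) :
    ∫⁻ x, ENNReal.ofReal (s.indicator 1 x ^ 2) ∂μ = μ s := by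
  rw [← lintegral_indicator_one hs]
  congr 1
  ext x
  by_cases hx : x ∈ s <;> simp [hx]

theorem setLIntegral_ofReal_sq_le {X : Type*} [MeasurableSpace X] {μ : Measure X} {s : Set X}
    (hs : MeasurableSet s) {g h : X → ℝ} {a : ℝ} (hgh : ∀ x ∈ s, g x ^ 2 ≤ a + 2 * h x ^ 2) :
    ∫⁻ x in s, ENNReal.ofReal (g x ^ 2) ∂μ ≤
      ENNReal.ofReal a * μ s + 2 * ∫⁻ x, ENNReal.ofReal (h x ^ 2) ∂μ := by
  calc ∫⁻ x in s, ENNReal.ofReal (g x ^ 2) ∂μ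
      ≤ ∫⁻ x in s, (ENNReal.ofReal a + 2 * ENNReal.ofReal (h x ^ 2)) ∂μ := by
        refine setLIntegral_mono' hs fun x hx => (ENNReal.ofReal_le_ofReal (hgh x hx)).trans ?_
        rw [← ENNReal.ofReal_ofNat 2, ← ENNReal.ofReal_mul zero_le_two]
        exact ENNReal.ofReal_add_le
    _ = ENNReal.ofReal a * μ s + 2 * ∫⁻ x in s, ENNReal.ofReal (h x ^ 2) ∂μ := by
        rw [lintegral_add_left measurable_const, setLIntegral_const,
          lintegral_const_mul' _ _ ENNReal.ofNat_ne_top]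
    _ ≤ _ := by gcongr _ + 2 * ?_; exact setLIntegral_le_lintegral s _

theorem ofReal_mul_measureReal_sq_mul_le {X : Type*} [MeasurableSpace X] {μ ν : Measure X}
    {s t u : Set X} (hst : s ⊆ t) (hut : u ⊆ t) (hμ : μ t ≠ ⊤) (hν : ν t ≠ ⊤) {a B : ℝ}
    (ha : 0 ≤ a) (hB : μ.real t * ν.real t ≤ B) :
    ENNReal.ofReal (a * μ.real s ^ 2) * ν u ≤ ENNReal.ofReal (a * B) * μ s := by
  have hμs : μ.real s ≤ μ.real t := measureReal_mono hst hμ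
  have hB0 : 0 ≤ B := hB.trans' (by positivity)
  calc ENNReal.ofReal (a * μ.real s ^ 2) * ν u
      ≤ ENNReal.ofReal (a * μ.real s ^ 2 * ν.real t) := by
        rw [ENNReal.ofReal_mul (by positivity) (q := ν.real t), ofReal_measureReal hν]
        gcongr
    _ ≤ ENNReal.ofReal (a * B * μ.real s) := by
        refine ENNReal.ofReal_le_ofReal ?_
        calc a * μ.real s ^ 2 * ν.real t = a * μ.real s * (μ.real s * ν.real t) := by ring
          _ ≤ a * μ.real s * (μ.real t * ν.real t) := by gcongr
          _ ≤ a * μ.real s * B := by gcongr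
          _ = a * B * μ.real s := by ring
    _ = ENNReal.ofReal (a * B) * μ s := by
        rw [ENNReal.ofReal_mul (by positivity), ofReal_measureReal
          (measure_ne_top_of_subset hst hμ)]

theorem abs_le_mul_rpow_of_le_dist {E : Type*} [NormedAddCommGroup E] {K : E → E → ℝ}
    {C β ρ : ℝ} (hK : ∀ x y, x ≠ y → |K x y| ≤ C * ‖x - y‖ ^ β) (hC : 0 ≤ C) (hβ : β ≤ 0)
    (hρ : 0 < ρ) {x y : E} (hxy : ρ ≤ dist x y) : |K x y| ≤ C * ρ ^ β := by
  refine (hK x y (dist_pos.1 (hρ.trans_le hxy))).trans ?_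
  rw [← dist_eq_norm]
  exact mul_le_mul_of_nonneg_left (Real.rpow_le_rpow_of_nonpos hρ hxy hβ) hC

section KernelOperator

variable {X : Type*} [MeasurableSpace X] {σ ω : Measure X} {T : (X → ℝ) → X → ℝ}
  {K : X → X → ℝ}

def HasKernelOffSupport [TopologicalSpace X] (T : (X → ℝ) → X → ℝ) (K : X → X → ℝ)
    (σ : Measure X) : Prop :=
  ∀ f : X → ℝ, Measurable f → ∀ x, x ∉ closure {y | f y ≠ 0} → T f x = ∫ y, K x y * f y ∂σ

theorem apply_indicator_eq_setIntegral [TopologicalSpace X]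
    (hrep : HasKernelOffSupport T K σ)
    {s : Set X} (hs : MeasurableSet s) {x : X} (hx : x ∉ closure s) :
    T (s.indicator 1) x = ∫ y in s, K x y ∂σ := by
  have hsupp : {y | s.indicator (1 : X → ℝ) y ≠ 0} = s := by
    ext y
    by_cases hy : y ∈ s <;> simp [hy]
  rw [hrep _ (measurable_one.indicator hs) x (by rwa [hsupp]), ← integral_indicator hs]
  congr 1
  ext y
  by_cases hy : y ∈ s <;> simp [hy]

theorem sq_apply_indicator_union_le [TopologicalSpace X]
    (hrep : HasKernelOffSupport T K σ)
    {A B : Set X} (hA : MeasurableSet A) (hB : MeasurableSet B) (hAB : Disjoint A B)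
    (hσA : σ A ≠ ⊤) {x : X} (hx : x ∉ closure (A ∪ B)) {M : ℝ} (hK : ∀ y ∈ A, |K x y| ≤ M) :
    T ((A ∪ B).indicator 1) x ^ 2 ≤ 2 * (M * σ.real A) ^ 2 + 2 * T (B.indicator 1) x ^ 2 := by
  rw [apply_indicator_eq_setIntegral hrep (hA.union hB) hx,
    apply_indicator_eq_setIntegral hrep hB fun h => hx (closure_mono subset_union_right h)]
  by_cases hint : IntegrableOn (K x) (A ∪ B) σ
  · rw [setIntegral_union hAB hB (hint.mono_set subset_union_left)
      (hint.mono_set subset_union_right)]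
    have hbound : ‖∫ y in A, K x y ∂σ‖ ≤ M * σ.real A :=
      norm_setIntegral_le_of_norm_le_const hσA.lt_top fun y hy =>
        (Real.norm_eq_abs _).trans_le (hK y hy)
    rw [Real.norm_eq_abs] at hbound
    have := sq_le_sq' (abs_le.1 hbound).1 (abs_le.1 hbound).2
    nlinarith [add_sq_le (a := ∫ y in A, K x y ∂σ) (b := ∫ y in B, K x y ∂σ)]
  · -- the Bochner integral of a non-integrable function is the junk value `0`
    rw [integral_undef hint, zero_pow two_ne_zero]
    positivity

theorem setLIntegral_sq_apply_indicator_closedBall_le [PseudoMetricSpace X]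
    [OpensMeasurableSpace X]
    (hrep : HasKernelOffSupport T K σ)
    {N : ℝ} (hbdd : ∀ f : X → ℝ, Measurable f →
      ∫⁻ x, ENNReal.ofReal (T f x ^ 2) ∂ω ≤
        ENNReal.ofReal (N ^ 2) * ∫⁻ x, ENNReal.ofReal (f x ^ 2) ∂σ)
    {c : X} {r ρ M : ℝ} (hρ : 0 ≤ ρ) (hM : 0 ≤ M) (hK : ∀ x y, ρ ≤ dist x y → |K x y| ≤ M)
    (hσ : σ (closedBall c r) ≠ ⊤) {E : Set X} (hE : MeasurableSet E)
    (hEc : Disjoint E (closedBall c r)) :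
    ∫⁻ x in E, ENNReal.ofReal (T ((closedBall c r).indicator 1) x ^ 2) ∂ω ≤
      ENNReal.ofReal (2 * (M * σ.real (closedBall c r)) ^ 2) * ω E +
        2 * (ENNReal.ofReal (N ^ 2) * σ (closedBall c r \ closedBall c (r - ρ))) := by
  set A := closedBall c (r - ρ)
  set B := closedBall c r \ A
  have hAQ : A ⊆ closedBall c r := closedBall_subset_closedBall (by linarith)
  have hB : MeasurableSet B := measurableSet_closedBall.diff measurableSet_closedBall
  have hpt : ∀ x ∈ E, T ((closedBall c r).indicator 1) x ^ 2 ≤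
      2 * (M * σ.real (closedBall c r)) ^ 2 + 2 * T (B.indicator 1) x ^ 2 := by
    intro x hx
    have hxQ : x ∉ closedBall c r := hEc.notMem_of_mem_left hx
    have hfar : ∀ y ∈ A, |K x y| ≤ M := fun y hy => hK x y <| by
      linarith [mem_closedBall.1 hy, not_le.1 (mem_closedBall.not.1 hxQ), dist_triangle x y c]
    have hQ : closedBall c r = A ∪ B := (union_sdiff_cancel hAQ).symm
    calc T ((closedBall c r).indicator 1) x ^ 2 = T ((A ∪ B).indicator 1) x ^ 2 := by rw [← hQ]
      _ ≤ 2 * (M * σ.real A) ^ 2 + 2 * T (B.indicator 1) x ^ 2 :=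
        sq_apply_indicator_union_le hrep measurableSet_closedBall hB disjoint_sdiff_right
          (measure_ne_top_of_subset hAQ hσ) (by rwa [← hQ, isClosed_closedBall.closure_eq]) hfar
      _ ≤ _ := by gcongr
  calc _ ≤ _ := setLIntegral_ofReal_sq_le hE hpt
    _ ≤ _ := by
      gcongr
      simpa [lintegral_ofReal_indicator_one_sq σ hB] using hbdd _ (measurable_one.indicator hB)

end KernelOperator

theorem setLIntegral_sq_apply_indicator_closedBall_le_of_halo {E : Type*}
    [NormedAddCommGroup E] [MeasurableSpace E] [OpensMeasurableSpace E] [ProperSpace E]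
    {σ ω : Measure E} [IsLocallyFiniteMeasure σ] [IsLocallyFiniteMeasure ω]
    {T : (E → ℝ) → E → ℝ} {K : E → E → ℝ}
    (hrep : HasKernelOffSupport T K σ)
    {N : ℝ} (hN : 0 ≤ N) (hbdd : ∀ f : E → ℝ, Measurable f →
      ∫⁻ x, ENNReal.ofReal (T f x ^ 2) ∂ω ≤
        ENNReal.ofReal (N ^ 2) * ∫⁻ x, ENNReal.ofReal (f x ^ 2) ∂σ)
    {C_CZ β : ℝ} (hCZ : 0 ≤ C_CZ) (hβ : 0 ≤ β)
    (hker : ∀ x y, x ≠ y → |K x y| ≤ C_CZ * ‖x - y‖ ^ (-β))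
    {A2 : ℝ} (hA2 : 0 ≤ A2) {c c' : E} {L r ρ ε : ℝ} (hr : 0 ≤ r)
    (hsub : closedBall c' r ⊆ closedBall c (L / 2))
    (hA2L : σ.real (closedBall c (L / 2)) * ω.real (closedBall c (L / 2)) ≤
      A2 * L ^ (2 * β))
    (hρ : 0 < ρ) (hε : 0 ≤ ε)
    (hhalo : 2 * σ (closedBall c' r \ closedBall c' (r - ρ)) ≤
      ENNReal.ofReal (ε ^ 2) * σ (closedBall c' r)) :
    ∫⁻ x in closedBall c (L / 2) \ closedBall c' r,
        ENNReal.ofReal (T ((closedBall c' r).indicator 1) x ^ 2) ∂ω ≤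
      ENNReal.ofReal ((√2 * C_CZ * (L / ρ) ^ β * √A2 + ε * N) ^ 2) *
        σ (closedBall c' r) := by
  have hL : 0 ≤ L := by
    linarith [dist_nonneg.trans (mem_closedBall.1 (hsub (mem_closedBall_self hr)))]
  have hconst : 2 * (C_CZ * ρ ^ (-β)) ^ 2 * (A2 * L ^ (2 * β)) =
      (√2 * C_CZ * (L / ρ) ^ β * √A2) ^ 2 := by
    rw [mul_comm A2, ← mul_assoc, mul_assoc 2, Real.mul_rpow_neg_sq_mul_rpow hρ hL]
    simp only [mul_pow, Real.sq_sqrt zero_le_two, Real.sq_sqrt hA2]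
    ring
  calc _ ≤ _ := setLIntegral_sq_apply_indicator_closedBall_le hrep hbdd hρ.le (by positivity)
          (fun x y => abs_le_mul_rpow_of_le_dist hker hCZ (by linarith) hρ)
          measure_closedBall_lt_top.ne (measurableSet_closedBall.diff measurableSet_closedBall)
          disjoint_sdiff_left
    _ ≤ ENNReal.ofReal ((√2 * C_CZ * (L / ρ) ^ β * √A2) ^ 2) * σ (closedBall c' r) +
          ENNReal.ofReal ((ε * N) ^ 2) * σ (closedBall c' r) := by
        gcongr ?_ + ?_
        · rw [← hconst, mul_pow, ← mul_assoc]
          exact ofReal_mul_measureReal_sq_mul_le hsub sdiff_subset measure_closedBall_lt_top.ne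
            measure_closedBall_lt_top.ne (by positivity) hA2L
        · exact ENNReal.two_mul_ofReal_sq_mul_le hhalo
    _ ≤ _ := ENNReal.ofReal_sq_mul_add_ofReal_sq_mul_le (by positivity) (by positivity) _

theorem grandchild_offtesting_bound_general (n m : ℕ) (α C_CZ Cd ε₁ : ℝ)
    (hαn : α < n) (hCZ : 0 < C_CZ)
    (hε0 : 0 < ε₁) :
    ∃ C : ℝ, 0 < C ∧
      ∀ (σ ω : Measure (Fin n → ℝ)),
        IsLocallyFiniteMeasure σ → IsLocallyFiniteMeasure ω → IsDoubling σ Cd →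
      ∀ (T : ((Fin n → ℝ) → ℝ) → ((Fin n → ℝ) → ℝ))
        (K : (Fin n → ℝ) → (Fin n → ℝ) → ℝ) (N A2 : ℝ),
        0 ≤ N → 0 ≤ A2 →
        -- kernel size condition
        (∀ x y, x ≠ y → |K x y| ≤ C_CZ * ‖x - y‖ ^ (α - n)) →
        -- `T = T^α_σ` is bounded from `L²(σ)` to `L²(ω)` with norm `𝔑 = N`
        (∀ f : (Fin n → ℝ) → ℝ, Measurable f →
          ∫⁻ x, ENNReal.ofReal ((T f x) ^ 2) ∂ω ≤
            ENNReal.ofReal (N ^ 2) * ∫⁻ x, ENNReal.ofReal ((f x) ^ 2) ∂σ) →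
        -- `T` is associated with the kernel `K` off the support
        (∀ f : (Fin n → ℝ) → ℝ, Measurable f →
          ∀ x, x ∉ closure {y | f y ≠ 0} → T f x = ∫ y, K x y * f y ∂σ) →
        -- Muckenhoupt condition `A₂^α(σ,ω) ≤ A2`
        (∀ (c : Fin n → ℝ) (l : ℝ), 0 < l →
          (σ (Cube n c l)).toReal * (ω (Cube n c l)).toReal ≤
            A2 * l ^ (2 * ((n : ℝ) - α))) →
        ∀ (c c' : Fin n → ℝ) (l : ℝ), 0 < l →
          Cube n c' (l / 2 ^ m) ⊆ Cube n c l →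
          (∫⁻ x in Cube n c (3 * l) \ Cube n c' (l / 2 ^ m),
              ENNReal.ofReal
                ((T ((Cube n c' (l / 2 ^ m)).indicator fun _ => (1 : ℝ)) x) ^ 2) ∂ω) ≤
            ENNReal.ofReal ((C * Real.sqrt A2 + ε₁ * N) ^ 2) *
              σ (Cube n c' (l / 2 ^ m)) := by
  set θ : ℝ≥0 := Cd.toNNReal ^ 5 / (Cd.toNNReal ^ 5 + 1)
  obtain ⟨J, hJ⟩ := ENNReal.exists_two_mul_pow_le (θ := θ)
    (by exact_mod_cast (div_lt_one (by positivity)).2 (lt_add_one _))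
    (ENNReal.ofReal_pos.2 (by positivity : 0 < ε₁ ^ 2)).ne'
  refine ⟨√2 * C_CZ * (3 * 2 ^ (m + J + 1)) ^ ((n : ℝ) - α), by positivity, ?_⟩
  intro σ ω _ _ hdb T K N A2 hN hA2 hker hbdd hrep hA2c c c' l hl hsub
  set r := l / 2 ^ m / 2
  have hr : 0 < r := by positivity
  have hQ : Cube n c' (l / 2 ^ m) = closedBall c' r := cube_eq_closedBall _ (by positivity)
  have h3I : Cube n c (3 * l) = closedBall c (3 * l / 2) := cube_eq_closedBall _ (by positivity)
  have hX : 3 * l / (r / 2 ^ J) = 3 * 2 ^ (m + J + 1) := by simp only [r]; field_simp; ring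
  have hA2I := hA2c c (3 * l) (by positivity)
  rw [hQ, cube_eq_closedBall c hl.le] at hsub
  rw [h3I] at hA2I ⊢
  rw [hQ, ← hX]
  refine setLIntegral_sq_apply_indicator_closedBall_le_of_halo hrep hN hbdd hCZ.le
    (by linarith) (by simpa only [neg_sub] using hker) hA2 hr.le
    (hsub.trans (closedBall_subset_closedBall (by linarith))) hA2I (by positivity) hε0.le ?_
  calc 2 * σ (closedBall c' r \ closedBall c' (r - r / 2 ^ J))
      ≤ 2 * ((θ : ℝ≥0∞) ^ J * σ (closedBall c' r)) := by
        gcongr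
        exact hdb.isBallDoubling.measure_annulus_le_pow c' hr J
    _ ≤ _ := by rw [← mul_assoc]; gcongr

/-- If `σ` is doubling and `T^α` is an `α`-fractional singular integral operator
bounded from `L²(σ)` to `L²(ω)` with norm `𝔑`, then for every `m`-th generation
grandchild `I'` of a cube `I` and every `0 < ε₁ < 1`,
`(∫_{3I∖I'} |T^α_σ 1_{I'}|² dω)^{1/2} ≤ (C_{m,ε₁} √A₂^α + ε₁ 𝔑) √(|I'|_σ)`. -/
theorem grandchild_offtesting_bound (n m : ℕ) (α C_CZ Cd ε₁ : ℝ)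
    (hn : 0 < n) (hα0 : 0 ≤ α) (hαn : α < n) (hCZ : 0 < C_CZ) (hm : 1 ≤ m)
    (hε0 : 0 < ε₁) (hε1 : ε₁ < 1) :
    ∃ C : ℝ, 0 < C ∧
      ∀ (σ ω : Measure (Fin n → ℝ)),
        IsLocallyFiniteMeasure σ → IsLocallyFiniteMeasure ω → IsDoubling σ Cd →
      ∀ (T : ((Fin n → ℝ) → ℝ) → ((Fin n → ℝ) → ℝ))
        (K : (Fin n → ℝ) → (Fin n → ℝ) → ℝ) (N A2 : ℝ),
        0 ≤ N → 0 ≤ A2 →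
        -- kernel size condition
        (∀ x y, x ≠ y → |K x y| ≤ C_CZ * ‖x - y‖ ^ (α - n)) →
        -- `T = T^α_σ` is bounded from `L²(σ)` to `L²(ω)` with norm `𝔑 = N`
        (∀ f : (Fin n → ℝ) → ℝ, Measurable f →
          ∫⁻ x, ENNReal.ofReal ((T f x) ^ 2) ∂ω ≤
            ENNReal.ofReal (N ^ 2) * ∫⁻ x, ENNReal.ofReal ((f x) ^ 2) ∂σ) →
        -- `T` is associated with the kernel `K` off the support
        (∀ f : (Fin n → ℝ) → ℝ, Measurable f →
          ∀ x, x ∉ closure {y | f y ≠ 0} → T f x = ∫ y, K x y * f y ∂σ) →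
        -- Muckenhoupt condition `A₂^α(σ,ω) ≤ A2`
        (∀ (c : Fin n → ℝ) (l : ℝ), 0 < l →
          (σ (Cube n c l)).toReal * (ω (Cube n c l)).toReal ≤
            A2 * l ^ (2 * ((n : ℝ) - α))) →
        ∀ (c c' : Fin n → ℝ) (l : ℝ), 0 < l →
          Cube n c' (l / 2 ^ m) ⊆ Cube n c l →
          (∫⁻ x in Cube n c (3 * l) \ Cube n c' (l / 2 ^ m),
              ENNReal.ofReal
                ((T ((Cube n c' (l / 2 ^ m)).indicator fun _ => (1 : ℝ)) x) ^ 2) ∂ω) ≤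
            ENNReal.ofReal ((C * Real.sqrt A2 + ε₁ * N) ^ 2) *
              σ (Cube n c' (l / 2 ^ m)) :=
  grandchild_offtesting_bound_general n m α C_CZ Cd ε₁ hαn hCZ hε0
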